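/- Under the preconditioner setup: λ_max( P̂^{-1/2} (A + μI) P̂^{-1/2} ) ≥ λ̂_k + μ − ‖ℰ‖₂. -/

import Mathlib

/-!
Test the Rayleigh quotient at the column `u = Û e_k` belonging to `λ̂_k`. The scaling
`λ̂_k + μ` in `P̂⁻¹` makes `u` a fixed vector of `P̂⁻¹`, hence of its positive square root, so
`uᵀ P̂^{-1/2}(A + μI)P̂^{-1/2} u = uᵀ(A + μI)u = λ̂_k + μ + uᵀEu + uᵀℰu ≥ λ̂_k + μ − ‖ℰ‖₂`.
-/

open Matrix

/-- The spectral norm (largest singular value) of a real matrix,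
as the `ℓ²→ℓ²` operator norm. -/
noncomputable def matSpectralNorm {m n : ℕ} (M : Matrix (Fin m) (Fin n) ℝ) : ℝ :=
  ‖LinearMap.toContinuousLinearMap (Matrix.toEuclideanLin M)‖

/-- The square root of a positive semidefinite matrix, as defined in Mathlib (December 2024). -/
noncomputable def Matrix.PosSemidef.sqrt {n 𝕜 : Type*} [Fintype n] [RCLike 𝕜] [PartialOrder 𝕜] [StarOrderedRing 𝕜] [DecidableEq n]
    {A : Matrix n n 𝕜} (hA : A.PosSemidef) : Matrix n n 𝕜 :=
  hA.1.eigenvectorUnitary.1 * diagonal ((↑) ∘ (√·) ∘ hA.1.eigenvalues) *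
    (star hA.1.eigenvectorUnitary : Matrix n n 𝕜)

/-- The largest eigenvalue of a real symmetric matrix, as the supremum of the
Rayleigh quotient over the unit sphere. -/
noncomputable def lmax {n : ℕ} (M : Matrix (Fin n) (Fin n) ℝ) : ℝ :=
  ⨆ x : Metric.sphere (0 : EuclideanSpace ℝ (Fin n)) 1,
    (inner ℝ (x : EuclideanSpace ℝ (Fin n))
      (Matrix.toEuclideanLin M (x : EuclideanSpace ℝ (Fin n))) : ℝ)

/-- The smallest eigenvalue of a real symmetric matrix, as the infimum of the
Rayleigh quotient over the unit sphere. -/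
noncomputable def lmin {n : ℕ} (M : Matrix (Fin n) (Fin n) ℝ) : ℝ :=
  ⨅ x : Metric.sphere (0 : EuclideanSpace ℝ (Fin n)) 1,
    (inner ℝ (x : EuclideanSpace ℝ (Fin n))
      (Matrix.toEuclideanLin M (x : EuclideanSpace ℝ (Fin n))) : ℝ)

namespace Matrix

section Sqrt

variable {n : Type*} [Fintype n] [DecidableEq n] {A : Matrix n n ℝ}

lemma PosSemidef.posSemidef_sqrt (hA : A.PosSemidef) : hA.sqrt.PosSemidef := by
  unfold PosSemidef.sqrt
  rw [star_eq_conjTranspose]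
  refine PosSemidef.mul_mul_conjTranspose_same (posSemidef_diagonal_iff.mpr fun i => ?_) _
  exact Real.sqrt_nonneg _

lemma PosSemidef.sqrt_mul_self (hA : A.PosSemidef) : hA.sqrt * hA.sqrt = A := by
  unfold PosSemidef.sqrt
  set C : Matrix n n ℝ := hA.1.eigenvectorUnitary.1
  set D : Matrix n n ℝ := diagonal ((↑) ∘ (√·) ∘ hA.1.eigenvalues)
  have hC : star C * C = 1 := by simp [C]
  have hD : D * D = diagonal (RCLike.ofReal ∘ hA.1.eigenvalues) := by
    rw [diagonal_mul_diagonal]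
    congr 1
    funext i
    exact Real.mul_self_sqrt (hA.eigenvalues_nonneg i)
  calc C * D * star C * (C * D * star C) = C * (D * (star C * C) * D) * star C := by
        simp only [mul_assoc]
    _ = A := by rw [hC, mul_one, hD]; exact hA.1.spectral_theorem.symm

/-- `S + 1` is positive definite, hence injective, and it kills `S v - v` because `S² v = v`. -/
lemma PosSemidef.mulVec_eq_self_of_mul_self_mulVec_eq_self {S : Matrix n n ℝ}
    (hS : S.PosSemidef) {v : n → ℝ} (h : (S * S) *ᵥ v = v) : S *ᵥ v = v := by
  have hkill : (S + 1) *ᵥ (S *ᵥ v - v) = 0 := by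
    rw [mulVec_sub, add_mulVec, add_mulVec, one_mulVec, one_mulVec, mulVec_mulVec, h]
    abel
  by_contra hne
  have hpos := (PosDef.posSemidef_add hS PosDef.one).dotProduct_mulVec_pos (sub_ne_zero.mpr hne)
  rw [hkill, dotProduct_zero] at hpos
  exact lt_irrefl 0 hpos

lemma PosSemidef.sqrt_mulVec_eq_self (hA : A.PosSemidef) {v : n → ℝ} (h : A *ᵥ v = v) :
    hA.sqrt *ᵥ v = v :=
  hA.posSemidef_sqrt.mulVec_eq_self_of_mul_self_mulVec_eq_self (by rwa [hA.sqrt_mul_self])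

end Sqrt

section Columns

variable {m k R : Type*} [Fintype m] [Fintype k] [DecidableEq k] [CommSemiring R]
  {U : Matrix m k R}

lemma transpose_mulVec_mulVec_single_one (hU : Uᵀ * U = 1) (j : k) :
    Uᵀ *ᵥ (U *ᵥ Pi.single j 1) = Pi.single j 1 := by
  rw [mulVec_mulVec, hU, one_mulVec]

lemma dotProduct_self_mulVec_single_one (hU : Uᵀ * U = 1) (j : k) :
    (U *ᵥ Pi.single j 1) ⬝ᵥ (U *ᵥ Pi.single j 1) = 1 := by
  rw [dotProduct_mulVec, ← mulVec_transpose, transpose_mulVec_mulVec_single_one hU,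
    single_dotProduct, one_mul, Pi.single_eq_same]

lemma mul_diagonal_mul_transpose_mulVec_single_one (hU : Uᵀ * U = 1) (d : k → R) (j : k) :
    (U * diagonal d * Uᵀ) *ᵥ (U *ᵥ Pi.single j 1) = d j • (U *ᵥ Pi.single j 1) := by
  rw [← mulVec_mulVec, transpose_mulVec_mulVec_single_one hU, ← mulVec_mulVec,
    diagonal_mulVec_single, mul_one, ← mulVec_smul, ← Pi.single_smul, smul_eq_mul, mul_one]

end Columns

lemma dotProduct_mul_mul_mulVec_of_mulVec_eq_self {n R : Type*} [Fintype n] [CommSemiring R]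
    {S : Matrix n n R} (hS : Sᵀ = S) (B : Matrix n n R) {v : n → R} (hv : S *ᵥ v = v) :
    v ⬝ᵥ ((S * B * S) *ᵥ v) = v ⬝ᵥ (B *ᵥ v) := by
  rw [← mulVec_mulVec, hv, ← mulVec_mulVec, dotProduct_mulVec, ← mulVec_transpose, hS, hv]

lemma one_sub_add_smul_mul_inv_diagonal_mulVec_single_one {m k : Type*} [Fintype m]
    [DecidableEq m] [Fintype k] [DecidableEq k] {U : Matrix m k ℝ} (hU : Uᵀ * U = 1)
    {d : k → ℝ} (hd : ∀ i, d i ≠ 0) (j : k) :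
    (1 - U * Uᵀ + d j • (U * (diagonal d)⁻¹ * Uᵀ)) *ᵥ (U *ᵥ Pi.single j 1) =
      U *ᵥ Pi.single j 1 := by
  have hinv : (diagonal d)⁻¹ = diagonal d⁻¹ := inv_eq_right_inv <| by
    rw [diagonal_mul_diagonal, ← diagonal_one]
    exact congrArg diagonal (funext fun i => mul_inv_cancel₀ (hd i))
  have hUUt : (U * Uᵀ) *ᵥ (U *ᵥ Pi.single j 1) = U *ᵥ Pi.single j 1 := by
    simpa using mul_diagonal_mul_transpose_mulVec_single_one hU 1 j
  rw [hinv, add_mulVec, sub_mulVec, one_mulVec, hUUt, smul_mulVec,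
    mul_diagonal_mul_transpose_mulVec_single_one hU, smul_smul, Pi.inv_apply,
    mul_inv_cancel₀ (hd j), one_smul, sub_self, zero_add]

end Matrix

section Rayleigh

open Matrix

variable {n : ℕ}

lemma inner_toEuclideanLin_toLp (M : Matrix (Fin n) (Fin n) ℝ) (v : Fin n → ℝ) :
    inner ℝ (WithLp.toLp 2 v) (toEuclideanLin M (WithLp.toLp 2 v)) = v ⬝ᵥ (M *ᵥ v) := by
  rw [toLpLin_apply, WithLp.ofLp_toLp, EuclideanSpace.inner_toLp_toLp, star_trivial,
    dotProduct_comm]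

lemma abs_inner_toEuclideanLin_le_matSpectralNorm (M : Matrix (Fin n) (Fin n) ℝ)
    {x : EuclideanSpace ℝ (Fin n)} (hx : ‖x‖ = 1) :
    |inner ℝ x (toEuclideanLin M x)| ≤ matSpectralNorm M := by
  set T := LinearMap.toContinuousLinearMap (toEuclideanLin M)
  calc |inner ℝ x (T x)| ≤ ‖x‖ * ‖T x‖ := abs_real_inner_le_norm _ _
    _ ≤ ‖x‖ * (‖T‖ * ‖x‖) := by gcongr; exact T.le_opNorm x
    _ = ‖T‖ := by rw [hx]; ring

lemma norm_toLp_eq_one {v : Fin n → ℝ} (hv : v ⬝ᵥ v = 1) :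
    ‖(WithLp.toLp 2 v : EuclideanSpace ℝ (Fin n))‖ = 1 := by
  have h : ‖(WithLp.toLp 2 v : EuclideanSpace ℝ (Fin n))‖ ^ 2 = 1 ^ 2 := by
    rw [← real_inner_self_eq_norm_sq, EuclideanSpace.inner_toLp_toLp, star_trivial, hv, one_pow]
  exact (pow_left_inj₀ (norm_nonneg _) zero_le_one two_ne_zero).mp h

lemma neg_matSpectralNorm_le_dotProduct_mulVec (M : Matrix (Fin n) (Fin n) ℝ)
    {v : Fin n → ℝ} (hv : v ⬝ᵥ v = 1) : -matSpectralNorm M ≤ v ⬝ᵥ (M *ᵥ v) := by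
  rw [← inner_toEuclideanLin_toLp]
  exact neg_le_of_abs_le (abs_inner_toEuclideanLin_le_matSpectralNorm M (norm_toLp_eq_one hv))

lemma dotProduct_mulVec_le_lmax (M : Matrix (Fin n) (Fin n) ℝ) {v : Fin n → ℝ}
    (hv : v ⬝ᵥ v = 1) : v ⬝ᵥ (M *ᵥ v) ≤ lmax M := by
  have hbdd : BddAbove (Set.range fun x : Metric.sphere (0 : EuclideanSpace ℝ (Fin n)) 1 =>
      inner ℝ (x : EuclideanSpace ℝ (Fin n)) (toEuclideanLin M x)) := by
    refine ⟨matSpectralNorm M, ?_⟩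
    rintro r ⟨⟨x, hx⟩, rfl⟩
    rw [mem_sphere_zero_iff_norm] at hx
    exact (le_abs_self _).trans (abs_inner_toEuclideanLin_le_matSpectralNorm M hx)
  rw [← inner_toEuclideanLin_toLp]
  exact le_ciSup hbdd ⟨_, mem_sphere_zero_iff_norm.mpr (norm_toLp_eq_one hv)⟩

end Rayleigh

/-- Preconditioner setup: `n > k ≥ 1`, `A` real symmetric with `A + μI` positive
definite (`μ ≥ 0`), `Û` with orthonormal columns (`ÛᵀÛ = I`),
`Θ̂ = diag(λ̂_1,…,λ̂_k)` with `λ̂_1 ≥ … ≥ λ̂_k > 0`, `Â_N = Û Θ̂ Ûᵀ`,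
`A = Â_N + E + ℰ` with `E, ℰ` symmetric and `E` positive semidefinite, and
`P̂⁻¹ = I − ÛÛᵀ + (λ̂_k + μ) Û (Θ̂ + μI)⁻¹ Ûᵀ`, which is symmetric positive definite;
`P̂^{-1/2}` is its positive semidefinite square root.
Then `λ_max(P̂^{-1/2}(A + μI)P̂^{-1/2}) ≥ λ̂_k + μ − ‖ℰ‖₂`. -/
theorem stmt18 {n k : ℕ} (hk : 1 ≤ k)
    (A : Matrix (Fin n) (Fin n) ℝ)
    (μ : ℝ) (hμ : 0 ≤ μ)
    (U : Matrix (Fin n) (Fin k) ℝ) (hU : Uᵀ * U = 1)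
    (lamh : Fin k → ℝ) (hlamh : Antitone lamh) (hlamhk : 0 < lamh ⟨k - 1, by omega⟩)
    (E Err : Matrix (Fin n) (Fin n) ℝ)
    (hEpsd : E.PosSemidef)
    (hsum : A = U * Matrix.diagonal lamh * Uᵀ + E + Err)
    (hPinvPD : ((1 : Matrix (Fin n) (Fin n) ℝ) - U * Uᵀ +
      (lamh ⟨k - 1, by omega⟩ + μ) • (U * (Matrix.diagonal lamh + μ • 1)⁻¹ * Uᵀ)).PosDef)
     :
    let S := hPinvPD.posSemidef.sqrt
    let M := S * (A + μ • 1) * S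
    lamh ⟨k - 1, by omega⟩ + μ - matSpectralNorm Err ≤ lmax M := by
  intro S M
  set j : Fin k := ⟨k - 1, by omega⟩
  set u : Fin n → ℝ := U *ᵥ Pi.single j 1
  have hu : u ⬝ᵥ u = 1 := dotProduct_self_mulVec_single_one hU j
  have hd : ∀ i, lamh i + μ ≠ 0 := fun i =>
    (by linarith [hlamh (Fin.le_def.mpr (by simp only [j]; omega) : i ≤ j)] : 0 < lamh i + μ).ne'
  have hSu : S *ᵥ u = u := by
    refine hPinvPD.posSemidef.sqrt_mulVec_eq_self ?_
    rw [smul_one_eq_diagonal, diagonal_add]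
    exact one_sub_add_smul_mul_inv_diagonal_mulVec_single_one hU hd j
  have hSsymm : Sᵀ = S := by
    rw [← conjTranspose_eq_transpose_of_trivial]
    exact hPinvPD.posSemidef.posSemidef_sqrt.1
  have hAu : u ⬝ᵥ ((A + μ • 1) *ᵥ u) = lamh j + μ + u ⬝ᵥ (E *ᵥ u) + u ⬝ᵥ (Err *ᵥ u) := by
    have hANu : (U * diagonal lamh * Uᵀ) *ᵥ u = lamh j • u :=
      mul_diagonal_mul_transpose_mulVec_single_one hU lamh j
    rw [hsum, add_mulVec, add_mulVec, add_mulVec, hANu, smul_mulVec, one_mulVec]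
    simp only [dotProduct_add, dotProduct_smul, hu, smul_eq_mul, mul_one]
    ring
  calc lamh j + μ - matSpectralNorm Err ≤ u ⬝ᵥ ((A + μ • 1) *ᵥ u) := by
        have hEu : 0 ≤ u ⬝ᵥ (E *ᵥ u) := by simpa using hEpsd.dotProduct_mulVec_nonneg u
        linarith [neg_matSpectralNorm_le_dotProduct_mulVec Err hu]
    _ = u ⬝ᵥ (M *ᵥ u) := (dotProduct_mul_mul_mulVec_of_mulVec_eq_self hSsymm _ hSu).symm
    _ ≤ lmax M := dotProduct_mulVec_le_lmax M hu
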